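/- For every ε > 0 there exists δ > 0 (depending only on ε and V) such that the following holds. Let V = E₀ ⊕ ⋯ ⊕ E_s be any direct-sum decomposition of V into nonzero subspaces with κ(E₀,…,E_s) ≥ ε, let 0 ≤ i < s, and write Wⁱ = E₀ ⊕ ⋯ ⊕ E_i and Vⁱ = E_{i+1} ⊕ ⋯ ⊕ E_s. Then for all w ∈ Wⁱ with ε ≤ |w| ≤ ε^{-1} and all v₁, v₂ ∈ Vⁱ with |v₁| ≤ ε^{-1}: ‖(w + v₁) ∧ v₂‖ ≥ δ · |w + v₁| · |v₂|. -/

import Mathlib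

open scoped RealInnerProductSpace
open Filter

variable {V : Type*} [NormedAddCommGroup V] [InnerProductSpace ℝ V]

/-- The projective distance between the lines spanned by two nonzero vectors:
`d(x̄, ȳ) = (1 − ⟨x,y⟫²/(|x|²|y|²))^{1/2}`. -/
noncomputable def projDist (x y : V) : ℝ :=
  Real.sqrt (1 - ⟪x, y⟫ ^ 2 / (‖x‖ ^ 2 * ‖y‖ ^ 2))

/-- The distance `d(x̄, P(W))` from the line spanned by `x` to the projective space of the
submodule `W`. -/
noncomputable def projDistToSub (x : V) (W : Submodule ℝ V) : ℝ :=
  sInf {r : ℝ | ∃ y : V, y ∈ W ∧ y ≠ 0 ∧ r = projDist x y}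

/-- `κ(E₀,…,E_s)`: the minimal projective distance between nonzero vectors lying in sums of
disjoint subfamilies of the `E i`. -/
noncomputable def kappa {ι : Type*} (E : ι → Submodule ℝ V) : ℝ :=
  sInf {r : ℝ | ∃ (I J : Finset ι) (x y : V), I.Nonempty ∧ J.Nonempty ∧ Disjoint I J ∧
    x ∈ (⨆ i ∈ I, E i) ∧ x ≠ 0 ∧ y ∈ (⨆ j ∈ J, E j) ∧ y ≠ 0 ∧ r = projDist x y}

/-- `Vⁱ = E_{i+1} ⊕ ⋯ ⊕ E_s`. -/
noncomputable def Vlow {s : ℕ} (E : Fin (s+1) → Submodule ℝ V) (i : ℕ) : Submodule ℝ V :=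
  ⨆ j : Fin (s+1), ⨆ _ : i < (j : ℕ), E j

/-- `Wⁱ = E₀ ⊕ ⋯ ⊕ E_i`. -/
noncomputable def Whigh {s : ℕ} (E : Fin (s+1) → Submodule ℝ V) (i : ℕ) : Submodule ℝ V :=
  ⨆ j : Fin (s+1), ⨆ _ : (j : ℕ) ≤ i, E j

/-- `‖x ∧ y‖ = (|x|²|y|² − ⟨x,y⟫²)^{1/2}`, the area of the parallelogram spanned by `x, y`. -/
noncomputable def wedgeNorm (x y : V) : ℝ :=
  Real.sqrt (‖x‖ ^ 2 * ‖y‖ ^ 2 - ⟪x, y⟫ ^ 2)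

/-!
The hypothesis `κ ≥ ε` says that a vector `w ∈ Wⁱ` stays at distance at least `ε‖w‖ ≥ ε²` from
every vector of `Vⁱ`. Since `‖x ∧ y‖ = ‖y‖ · dist(x, ℝ y)` and `w + v₁ - t v₂ = w - (t v₂ - v₁)`
with `t v₂ - v₁ ∈ Vⁱ`, this gives `‖(w + v₁) ∧ v₂‖ ≥ ε² ‖v₂‖`, while `‖w + v₁‖ ≤ 2ε⁻¹`; so
`δ = ε³ / 2` works.
-/

lemma norm_sub_smul_sq_mul_norm_sq (x y : V) (t : ℝ) :
    ‖x - t • y‖ ^ 2 * ‖y‖ ^ 2 =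
      (‖x‖ ^ 2 * ‖y‖ ^ 2 - ⟪x, y⟫ ^ 2) + (t * ‖y‖ ^ 2 - ⟪x, y⟫) ^ 2 := by
  rw [norm_sub_sq_real, real_inner_smul_right, norm_smul, Real.norm_eq_abs, mul_pow, sq_abs]
  ring

lemma wedgeNorm_eq_norm_sub_smul_mul_norm (x y : V) :
    wedgeNorm x y = ‖x - (⟪x, y⟫ / ‖y‖ ^ 2) • y‖ * ‖y‖ := by
  have hcoef : ⟪x, y⟫ / ‖y‖ ^ 2 * ‖y‖ ^ 2 - ⟪x, y⟫ = 0 := by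
    rcases eq_or_ne y 0 with rfl | hy
    · simp
    · field_simp
      ring
  rw [wedgeNorm, ← Real.sqrt_sq (by positivity : 0 ≤ ‖x - (⟪x, y⟫ / ‖y‖ ^ 2) • y‖ * ‖y‖),
    mul_pow, norm_sub_smul_sq_mul_norm_sq, hcoef]
  ring_nf

lemma wedgeNorm_le_norm_sub_smul_mul_norm (x y : V) (t : ℝ) :
    wedgeNorm x y ≤ ‖x - t • y‖ * ‖y‖ := by
  rw [wedgeNorm, ← Real.sqrt_sq (by positivity : 0 ≤ ‖x - t • y‖ * ‖y‖), mul_pow,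
    norm_sub_smul_sq_mul_norm_sq]
  exact Real.sqrt_le_sqrt (le_add_of_nonneg_right (sq_nonneg _))

lemma mul_norm_le_wedgeNorm_of_forall_le_norm_sub_smul {x y : V} {c : ℝ}
    (h : ∀ t : ℝ, c ≤ ‖x - t • y‖) : c * ‖y‖ ≤ wedgeNorm x y := by
  rw [wedgeNorm_eq_norm_sub_smul_mul_norm]
  exact mul_le_mul_of_nonneg_right (h _) (norm_nonneg y)

lemma projDist_mul_norm_mul_norm (x y : V) : projDist x y * ‖x‖ * ‖y‖ = wedgeNorm x y := by
  rcases eq_or_ne x 0 with rfl | hx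
  · simp [wedgeNorm]
  rcases eq_or_ne y 0 with rfl | hy
  · simp [wedgeNorm]
  have hxy : 0 < ‖x‖ ^ 2 * ‖y‖ ^ 2 := by positivity
  rw [mul_assoc, projDist, wedgeNorm, ← Real.sqrt_sq (by positivity : 0 ≤ ‖x‖ * ‖y‖),
    ← Real.sqrt_mul' _ (sq_nonneg _), mul_pow, sub_mul, div_mul_cancel₀ _ hxy.ne', one_mul]

lemma projDist_mul_norm_le_norm_sub (x y : V) : projDist x y * ‖x‖ ≤ ‖x - y‖ := by
  rcases eq_or_ne y 0 with rfl | hy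
  · simp [projDist]
  have hwedge := wedgeNorm_le_norm_sub_smul_mul_norm x y 1
  rw [one_smul, ← projDist_mul_norm_mul_norm] at hwedge
  exact le_of_mul_le_mul_right hwedge (norm_pos_iff.2 hy)

lemma projDist_le_one (x y : V) : projDist x y ≤ 1 :=
  Real.sqrt_le_one.2 (sub_le_self _ (by positivity))

lemma kappa_le_one {ι : Type*} (E : ι → Submodule ℝ V) : kappa E ≤ 1 := by
  refine (Real.sInf_le_sSup _ ⟨0, ?_⟩ ⟨1, ?_⟩).trans (Real.sSup_le ?_ zero_le_one) <;>
    rintro _ ⟨I, J, x, y, -, -, -, -, -, -, -, rfl⟩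
  exacts [Real.sqrt_nonneg _, projDist_le_one x y, projDist_le_one x y]

lemma kappa_le_projDist {ι : Type*} (E : ι → Submodule ℝ V) {I J : Finset ι}
    (hIJ : Disjoint I J) {x y : V} (hx : x ∈ ⨆ i ∈ I, E i) (hx0 : x ≠ 0)
    (hy : y ∈ ⨆ j ∈ J, E j) (hy0 : y ≠ 0) : kappa E ≤ projDist x y := by
  have hI : I.Nonempty := Finset.nonempty_iff_ne_empty.2 (by rintro rfl; simp_all)
  have hJ : J.Nonempty := Finset.nonempty_iff_ne_empty.2 (by rintro rfl; simp_all)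
  refine csInf_le ⟨0, ?_⟩ ⟨I, J, x, y, hI, hJ, hIJ, hx, hx0, hy, hy0, rfl⟩
  rintro r ⟨_, _, _, _, _, _, _, _, _, _, _, rfl⟩
  exact Real.sqrt_nonneg _

section Flag

variable {s : ℕ} (E : Fin (s + 1) → Submodule ℝ V) (i : ℕ)

lemma Whigh_eq_biSup : Whigh E i = ⨆ j ∈ Finset.univ.filter (fun j : Fin (s + 1) => ↑j ≤ i), E j := by
  simp [Whigh]

lemma Vlow_eq_biSup : Vlow E i = ⨆ j ∈ Finset.univ.filter (fun j : Fin (s + 1) => i < ↑j), E j := by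
  simp [Vlow]

lemma kappa_mul_norm_le_norm_sub {w u : V} (hw : w ∈ Whigh E i) (hu : u ∈ Vlow E i) :
    kappa E * ‖w‖ ≤ ‖w - u‖ := by
  rcases eq_or_ne w 0 with rfl | hw0
  · simp
  rcases eq_or_ne u 0 with rfl | hu0
  · simpa using mul_le_mul_of_nonneg_right (kappa_le_one E) (norm_nonneg w)
  have hdisj : Disjoint (Finset.univ.filter (fun j : Fin (s + 1) => ↑j ≤ i))
      (Finset.univ.filter (fun j : Fin (s + 1) => i < ↑j)) :=
    Finset.disjoint_filter.2 fun _ _ hle hlt => (Nat.not_lt.2 hle) hlt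
  rw [Whigh_eq_biSup] at hw
  rw [Vlow_eq_biSup] at hu
  calc kappa E * ‖w‖ ≤ projDist w u * ‖w‖ :=
        mul_le_mul_of_nonneg_right (kappa_le_projDist E hdisj hw hw0 hu hu0) (norm_nonneg w)
    _ ≤ ‖w - u‖ := projDist_mul_norm_le_norm_sub w u

end Flag

theorem stmt11_general :
    ∀ ε > (0 : ℝ), ∃ δ > (0 : ℝ), ∀ (s : ℕ) (E : Fin (s+1) → Submodule ℝ V),
      DirectSum.IsInternal E → (∀ k, E k ≠ ⊥) → ε ≤ kappa E →
      ∀ i : ℕ, i < s →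
      ∀ w ∈ Whigh E i, ε ≤ ‖w‖ → ‖w‖ ≤ ε⁻¹ →
      ∀ v₁ ∈ Vlow E i, ‖v₁‖ ≤ ε⁻¹ →
      ∀ v₂ ∈ Vlow E i,
        δ * ‖w + v₁‖ * ‖v₂‖ ≤ wedgeNorm (w + v₁) v₂ := by
  intro ε hε
  refine ⟨ε ^ 3 / 2, by positivity, ?_⟩
  intro s E _ _ hκ i _ w hw hw_lower hw_upper v₁ hv₁ hv₁_upper v₂ hv₂
  have hsep (t : ℝ) : ε ^ 2 ≤ ‖w + v₁ - t • v₂‖ :=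
    calc ε ^ 2 ≤ kappa E * ‖w‖ := by nlinarith [norm_nonneg w]
      _ ≤ ‖w - (t • v₂ - v₁)‖ :=
        kappa_mul_norm_le_norm_sub E i hw (sub_mem (Submodule.smul_mem _ t hv₂) hv₁)
      _ = ‖w + v₁ - t • v₂‖ := by congr 1; abel
  have hsum : ε ^ 3 / 2 * ‖w + v₁‖ ≤ ε ^ 2 :=
    calc ε ^ 3 / 2 * ‖w + v₁‖ ≤ ε ^ 3 / 2 * (ε⁻¹ + ε⁻¹) := by
          gcongr
          exact (norm_add_le w v₁).trans (add_le_add hw_upper hv₁_upper)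
      _ = ε ^ 2 := by field_simp; ring
  calc ε ^ 3 / 2 * ‖w + v₁‖ * ‖v₂‖ ≤ ε ^ 2 * ‖v₂‖ := by gcongr
    _ ≤ wedgeNorm (w + v₁) v₂ := mul_norm_le_wedgeNorm_of_forall_le_norm_sub_smul hsep

/-- Lemma 5.4 of the paper. For every `ε > 0` there is `δ > 0` such that
for every splitting `V = E₀ ⊕ ⋯ ⊕ E_s` with `κ(E₀,…,E_s) ≥ ε`, every `0 ≤ i < s`, every
`w ∈ Wⁱ` with `ε ≤ |w| ≤ ε⁻¹` and all `v₁, v₂ ∈ Vⁱ` with `|v₁| ≤ ε⁻¹`: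
`‖(w + v₁) ∧ v₂‖ ≥ δ · |w + v₁| · |v₂|`. -/
theorem stmt11 [FiniteDimensional ℝ V] (hdim : 2 ≤ Module.finrank ℝ V) :
    ∀ ε > (0 : ℝ), ∃ δ > (0 : ℝ), ∀ (s : ℕ) (E : Fin (s+1) → Submodule ℝ V),
      DirectSum.IsInternal E → (∀ k, E k ≠ ⊥) → ε ≤ kappa E →
      ∀ i : ℕ, i < s →
      ∀ w ∈ Whigh E i, ε ≤ ‖w‖ → ‖w‖ ≤ ε⁻¹ →
      ∀ v₁ ∈ Vlow E i, ‖v₁‖ ≤ ε⁻¹ →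
      ∀ v₂ ∈ Vlow E i,
        δ * ‖w + v₁‖ * ‖v₂‖ ≤ wedgeNorm (w + v₁) v₂ :=
  stmt11_general
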